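/- Let z ≥ 1 and let m = (m_1, ..., m_s) be a partition with s ≥ 2 parts and |m| = Σ m_i. Then s(|m|; z) ≤ Σ_{i=1}^{s} s(m_i; z) in dominance order, where the right-hand side is the componentwise partition sum. Moreover, if there exists a nonempty subset J ⊆ {1, ..., s} with z < Σ_{i∈J} m_i, then this inequality is strict. -/

import Mathlib

namespace PartStmt

/-- Sorted (nonincreasing) list of parts of a partition, represented as a multiset. -/
def parts (m : Multiset ℕ) : List ℕ := (m.sort (· ≤ ·)).reverse

/-- The `i`-th part (0-indexed), with `0` beyond the length. -/
def part (m : Multiset ℕ) (i : ℕ) : ℕ := (parts m).getD i 0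

/-- Partial sum of the `k` largest parts. -/
def psum (m : Multiset ℕ) (k : ℕ) : ℕ := ∑ i ∈ Finset.range k, part m i

/-- Dominance order: every partial sum of `l` is at most that of `m`. -/
def Dom (l m : Multiset ℕ) : Prop := ∀ k, psum l k ≤ psum m k

/-- Strict dominance. -/
def StrictDom (l m : Multiset ℕ) : Prop := Dom l m ∧ l ≠ m

/-- Componentwise sum of two partitions (sorted part sequences added, zero padding). -/
def psAdd (l m : Multiset ℕ) : Multiset ℕ :=
  ((Multiset.range (Multiset.card l + Multiset.card m)).map
    (fun i => part l i + part m i)).filter (0 < ·)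

/-- The transpose (conjugate) partition: the `j`-th column length `#{x ∈ m : x ≥ j+1}`. -/
def transpose (m : Multiset ℕ) : Multiset ℕ :=
  ((Multiset.range m.sum).map
    (fun j => Multiset.card (m.filter (fun x => j + 1 ≤ x)))).filter (0 < ·)

/-- The partition `s(m; z) = (z^a, b)` where `m = a z + b`, `0 ≤ b < z`. -/
def sPart (m z : ℕ) : Multiset ℕ :=
  Multiset.replicate (m / z) z + (if m % z = 0 then 0 else {m % z})

/-- `d_com^{(z)}(p) = Σ_i s(p_i; z)` (componentwise partition sum). -/
def dcom (z : ℕ) (p : Multiset ℕ) : Multiset ℕ :=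
  (parts p).foldr (fun x acc => psAdd (sPart x z) acc) 0

/-- A multiset is a partition when all its parts are positive. -/
def IsPartition (m : Multiset ℕ) : Prop := ∀ x ∈ m, 0 < x


lemma parts_coe (L : List ℕ) (hL : L.Pairwise (fun a b => b ≤ a)) : parts (↑L) = L := by
  unfold parts
  have h1 : Multiset.sort (↑L : Multiset ℕ) (· ≤ ·) = L.reverse := by
    refine (fun hp h1 h2 => List.Perm.eq_of_pairwise' (r := (· ≤ · : ℕ → ℕ → Prop)) h1 h2 hp) ?_ ?_ ?_
    · have : (↑(Multiset.sort (↑L : Multiset ℕ) (· ≤ ·)) : Multiset ℕ) = ↑L.reverse := by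
        simp [Multiset.sort_eq, Multiset.coe_reverse, List.mergeSort_perm]
      exact Multiset.coe_eq_coe.mp this
    · exact Multiset.pairwise_sort _ _
    · exact List.pairwise_reverse.mpr hL
  rw [h1, List.reverse_reverse]

lemma part_coe (L : List ℕ) (hL : L.Pairwise (fun a b => b ≤ a)) (i : ℕ) :
    part (↑L) i = L.getD i 0 := by
  unfold part; rw [parts_coe L hL]

lemma part_rmf (g : ℕ → ℕ) (n : ℕ)
    (hg : ∀ i j, i ≤ j → g j ≤ g i) (hv : ∀ i, n ≤ i → g i = 0) (i : ℕ) :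
    part (((Multiset.range n).map g).filter (0 < ·)) i = g i := by
  have hex : ∃ t, g t = 0 := ⟨n, hv n le_rfl⟩
  set t := Nat.find hex with ht
  have hgt : g t = 0 := Nat.find_spec hex
  have htn : t ≤ n := by
    by_contra h
    exact (Nat.find_min hex (lt_of_not_ge h)) (hv n le_rfl)
  have hpos : ∀ i < t, 0 < g i := fun i hi => Nat.pos_of_ne_zero (Nat.find_min hex hi)
  have hzero : ∀ i, t ≤ i → g i = 0 := fun i hi => Nat.le_zero.mp (hgt ▸ hg t i hi)
  have hlist : ((Multiset.range n).map g).filter (0 < ·) =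
      ↑((List.range t).map g) := by
    have : (Multiset.range n) = ↑(List.range n) := rfl
    rw [this, Multiset.map_coe, Multiset.filter_coe, Multiset.coe_eq_coe]
    have hsplit : List.range n = List.range t ++ (List.range (n - t)).map (t + ·) := by
      rw [← List.range_add, Nat.add_sub_cancel' htn]
    rw [hsplit, List.map_append, List.filter_append]
    have h1 : ((List.range t).map g).filter (fun x => decide (0 < x)) = (List.range t).map g := by
      rw [List.filter_eq_self]
      intro a ha
      simp only [List.mem_map, List.mem_range] at ha
      obtain ⟨j, hj, rfl⟩ := ha
      simpa using hpos j hj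
    have h2 : (((List.range (n-t)).map (t + ·)).map g).filter (fun x => decide (0 < x)) = [] := by
      rw [List.filter_eq_nil_iff]
      intro a ha
      simp only [List.mem_map, List.mem_range] at ha
      obtain ⟨j, ⟨jj, hjj, rfl⟩, rfl⟩ := ha
      simp [hzero _ (Nat.le_add_right t jj)]
    rw [h1, h2, List.append_nil]
  rw [hlist, part_coe]
  · rcases lt_or_ge i t with h | h
    · rw [List.getD_eq_getElem _ _ (by simpa using h)]
      simp
    · rw [List.getD_eq_default _ _ (by simpa using h), hzero i h]
  · exact List.Pairwise.map g (fun a b hab => hg a b (le_of_lt hab)) (List.pairwise_lt_range (n := t))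

lemma parts_sorted (m : Multiset ℕ) : (parts m).Pairwise (fun a b => b ≤ a) := by
  unfold parts
  exact List.pairwise_reverse.mpr (Multiset.pairwise_sort m (· ≤ ·))

lemma length_parts (m : Multiset ℕ) : (parts m).length = Multiset.card m := by
  simp [parts]

lemma part_eq_zero (m : Multiset ℕ) (i : ℕ) (h : Multiset.card m ≤ i) : part m i = 0 := by
  unfold part
  exact List.getD_eq_default _ _ (by rwa [length_parts])

lemma part_antitone (m : Multiset ℕ) {i j : ℕ} (h : i ≤ j) : part m j ≤ part m i := by
  rcases eq_or_lt_of_le h with rfl | hij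
  · exact le_rfl
  rcases lt_or_ge j (parts m).length with hj | hj
  · unfold part
    rw [List.getD_eq_getElem _ _ hj, List.getD_eq_getElem _ _ (lt_trans hij hj)]
    exact (List.pairwise_iff_getElem.mp (parts_sorted m)) i j _ hj hij
  · rw [part, List.getD_eq_default _ _ hj]
    exact Nat.zero_le _


lemma part_psAdd (l m : Multiset ℕ) (i : ℕ) :
    part (psAdd l m) i = part l i + part m i := by
  apply part_rmf
  · intro a b hab
    exact Nat.add_le_add (part_antitone l hab) (part_antitone m hab)
  · intro a ha
    rw [part_eq_zero l a (le_trans (Nat.le_add_right _ _) ha),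
        part_eq_zero m a (le_trans (Nat.le_add_left _ _) ha)]

lemma psum_psAdd (l m : Multiset ℕ) (k : ℕ) :
    psum (psAdd l m) k = psum l k + psum m k := by
  unfold psum
  rw [← Finset.sum_add_distrib]
  exact Finset.sum_congr rfl fun i _ => part_psAdd l m i

lemma part_sPart (x z : ℕ) (hz : 1 ≤ z) (i : ℕ) :
    part (sPart x z) i = if i < x / z then z else if i = x / z then x % z else 0 := by
  have hb : x % z < z := Nat.mod_lt x hz
  have hrepr : sPart x z = ↑(List.replicate (x / z) z ++ if x % z = 0 then [] else [x % z]) := by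
    unfold sPart
    rw [← Multiset.coe_replicate]
    split_ifs with h <;> simp [← Multiset.coe_singleton]
  rw [hrepr, part_coe]
  · set a := x / z
    set B : List ℕ := if x % z = 0 then [] else [x % z] with hB
    rcases lt_trichotomy i a with h | h | h
    · rw [List.getD_eq_getElem _ _ (by simp [B]; omega)]
      rw [if_pos h]
      rw [List.getElem_append_left (by simpa using h)]
      simp
    · subst h
      rw [if_neg (lt_irrefl _), if_pos rfl]
      by_cases hb0 : x % z = 0
      · rw [List.getD_eq_default _ _ (by simp [B, hb0]), hb0]
      · rw [List.getD_eq_getElem _ _ (by simp [B, hb0])]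
        rw [List.getElem_append_right (by simp)]
        simp [B, hb0]
    · rw [if_neg (by omega), if_neg (by omega)]
      apply List.getD_eq_default
      have : B.length ≤ 1 := by rw [hB]; split_ifs with h <;> simp
      simp only [List.length_append, List.length_replicate]
      omega
  · apply List.pairwise_append.mpr
    refine ⟨?_, ?_, ?_⟩
    · simp [List.pairwise_replicate]
    · split_ifs with h <;> simp
    · intro a ha b hb
      rw [List.eq_of_mem_replicate ha]
      rcases List.mem_ite_nil_left.mp hb with ⟨h1, h2⟩
      rw [List.mem_singleton.mp h2]
      omega

lemma psum_sPart (x z : ℕ) (hz : 1 ≤ z) (k : ℕ) :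
    psum (sPart x z) k = min x (k * z) := by
  induction k with
  | zero => simp [psum]
  | succ k ih =>
    rw [psum, Finset.sum_range_succ, ← psum, ih, part_sPart x z hz]
    have hdm : z * (x / z) + x % z = x := Nat.div_add_mod x z
    have hb : x % z < z := Nat.mod_lt x hz
    have hkz : (k + 1) * z = k * z + z := by ring
    rcases lt_trichotomy k (x / z) with h | h | h
    · rw [if_pos h]
      have h1 : (k + 1) * z ≤ z * (x / z) := by
        rw [mul_comm z]; exact Nat.mul_le_mul_right z h
      omega
    · rw [if_neg (by omega), if_pos h]
      have e : k * z = z * (x / z) := by rw [h, mul_comm]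
      omega
    · rw [if_neg (by omega), if_neg (by omega)]
      have h1 : z * (x / z) + z ≤ k * z := by
        have h2 : (x / z + 1) * z ≤ k * z := Nat.mul_le_mul_right z h
        have h3 : (x / z + 1) * z = z * (x / z) + z := by ring
        omega
      omega

lemma psum_zero' (k : ℕ) : psum 0 k = 0 := by
  have : ∀ i, part (0 : Multiset ℕ) i = 0 := by
    intro i; apply part_eq_zero; simp
  simp [psum, this]

lemma psum_dcom (z : ℕ) (hz : 1 ≤ z) (m : Multiset ℕ) (k : ℕ) :
    psum (dcom z m) k = (m.map (fun x => min x (k * z))).sum := by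
  have key : ∀ L : List ℕ,
      psum (L.foldr (fun x acc => psAdd (sPart x z) acc) 0) k
        = (L.map (fun x => min x (k * z))).sum := by
    intro L
    induction L with
    | nil => simpa using psum_zero' k
    | cons a L ih =>
      simp only [List.foldr_cons, List.map_cons, List.sum_cons]
      rw [psum_psAdd, ih, psum_sPart a z hz]
  rw [dcom, key]
  have : (↑(parts m) : Multiset ℕ) = m := by
    simp [parts, Multiset.coe_reverse, Multiset.sort_eq]
  calc ((parts m).map fun x => min x (k * z)).sum
      = ((↑(parts m) : Multiset ℕ).map fun x => min x (k*z)).sum := by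
        rw [Multiset.map_coe, Multiset.sum_coe]
    _ = _ := by rw [this]

lemma min_sum_le (m : Multiset ℕ) (c : ℕ) :
    min m.sum c ≤ (m.map (fun x => min x c)).sum := by
  induction m using Multiset.induction with
  | empty => simp
  | cons a s ih =>
    rw [Multiset.sum_cons, Multiset.map_cons, Multiset.sum_cons]
    omega


/-- `s(|m|;z) ≤ Σ_i s(m_i;z)` in dominance order; strict if some nonempty
subset of the parts has sum `> z`. -/
theorem stmt4 (z : ℕ) (hz : 1 ≤ z) (m : Multiset ℕ) (hm : IsPartition m)
    (hcard : 2 ≤ Multiset.card m) :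
    Dom (sPart m.sum z) (dcom z m) ∧
    ((∃ t : Multiset ℕ, t ≤ m ∧ t ≠ 0 ∧ z < t.sum) →
      StrictDom (sPart m.sum z) (dcom z m)) := by
  have hdom : Dom (sPart m.sum z) (dcom z m) := by
    intro k
    rw [psum_sPart _ _ hz, psum_dcom z hz]
    exact min_sum_le m (k * z)
  refine ⟨hdom, ?_⟩
  rintro ⟨t, htm, ht0, htz⟩
  have hS : z < m.sum := by
    obtain ⟨u, rfl⟩ := exists_add_of_le htm
    rw [Multiset.sum_add]
    omega
  have key : psum (sPart m.sum z) 1 < psum (dcom z m) 1 := by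
    rw [psum_sPart _ _ hz, psum_dcom z hz, one_mul]
    rw [min_eq_right (le_of_lt hS)]
    by_cases hall : ∀ x ∈ m, x ≤ z
    · have : m.map (fun x => min x z) = m.map id :=
        Multiset.map_congr rfl (fun x hx => min_eq_left (hall x hx))
      rw [this, Multiset.map_id]
      exact hS
    · push_neg at hall
      obtain ⟨y, hy, hzy⟩ := hall
      obtain ⟨s, rfl⟩ := Multiset.exists_cons_of_mem hy
      rw [Multiset.map_cons, Multiset.sum_cons, min_eq_right (le_of_lt hzy)]
      have hs : s ≠ 0 := by
        intro h
        rw [h] at hcard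
        simp at hcard
      obtain ⟨w, hw⟩ := Multiset.exists_mem_of_ne_zero hs
      have hw1 : 1 ≤ min w z := le_min (hm w (Multiset.mem_cons_of_mem hw)) hz
      have : min w z ≤ (s.map (fun x => min x z)).sum :=
        Multiset.single_le_sum (fun x _ => Nat.zero_le x) _
          (Multiset.mem_map_of_mem _ hw)
      omega
  refine ⟨hdom, ?_⟩
  intro heq
  rw [heq] at key
  exact lt_irrefl _ key

end PartStmt
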